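/- Let p be a prime, n ≥ 1, R a commutative ring in which p·1 = 0, and v ∈ R. Let F ∈ R⟦X,Y⟧ be a formal group law (F(X,0) = X, F(0,Y) = Y, F(X,Y) = F(Y,X), F(F(X,Y),Z) = F(X,F(Y,Z)), zero constant term) whose p-series satisfies [p]_F(X) = v·X^{p^n}, where [m]_F is defined by [0]_F = 0 and [m+1]_F(X) = F([m]_F(X), X). Then every f ∈ R⟦X⟧ with zero constant term satisfying f(F(X,Y)) = F(f(X), f(Y)) obeys f(v·X^{p^n}) = v·(f(X))^{p^n}; consequently, writing f = Σ_{m≥1} a_m X^m, one has v·a_m^{p^n} = v^m·a_m for all m ≥ 1. -/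

import Mathlib

/-- Substitution of a multivariate power series `a` (with zero constant term) for the
variable of a one-variable power series `f`; coefficientwise, the coefficient of the
monomial `d` in `f(a)` is `Σ_{m ≤ |d|} (coeff m f) · (coeff d (a^m))`, which is the usual
substitution whenever `a` has zero constant term. -/
noncomputable def substPS {R : Type} [CommRing R] {σ : Type} (a : MvPowerSeries σ R)
    (f : PowerSeries R) : MvPowerSeries σ R :=
  fun d => ∑ m ∈ Finset.range (d.sum (fun _ k => k) + 1),
    PowerSeries.coeff m f * MvPowerSeries.coeff d (a ^ m)

/-- Substitution of two power series `g₀, g₁` (with zero constant terms) for the two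
variables of `F ∈ R⟦X,Y⟧`. -/
noncomputable def subst2 {R : Type} [CommRing R] {σ : Type} (g₀ g₁ : MvPowerSeries σ R)
    (F : MvPowerSeries (Fin 2) R) : MvPowerSeries σ R :=
  fun d => ∑ i ∈ Finset.range (d.sum (fun _ k => k) + 1),
    ∑ j ∈ Finset.range (d.sum (fun _ k => k) + 1),
      MvPowerSeries.coeff (Finsupp.single (0 : Fin 2) i + Finsupp.single (1 : Fin 2) j) F *
        MvPowerSeries.coeff d (g₀ ^ i * g₁ ^ j)

/-! A homomorphism `f` of `F` commutes with every `[m]_F`, by induction on `m`: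
`f([m+1](X)) = F(f([m](X)), f(X)) = F([m](f(X)), f(X)) = [m+1](f(X))`. For `m = p` this is
`f(v X^{p^n}) = v f(X)^{p^n}`. The coefficient of `X^{m p^n}` on the left is `v^m a_m`, and on
the right it is `v a_m^{p^n}`, because `p = 0` in `R` gives `f^{p^n} = φ(f)(X^{p^n})`, where `φ`
raises every coefficient to the power `p^n`.

On series with zero constant term, `substPS` and `subst2` agree with Mathlib's
`PowerSeries.subst` and `MvPowerSeries.subst`, whose composition laws carry the induction. -/

open MvPowerSeries

section

variable {R : Type} [CommRing R] {σ τ : Type}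

theorem MvPowerSeries.coeff_pow_eq_zero_of_degree_lt {a : MvPowerSeries σ R}
    (ha : constantCoeff a = 0) {d : σ →₀ ℕ} {k : ℕ} (hk : d.degree < k) :
    coeff d (a ^ k) = 0 :=
  coeff_of_lt_order <| (Nat.cast_lt.mpr hk).trans_le (le_order_pow_of_constantCoeff_eq_zero k ha)

theorem MvPowerSeries.coeff_pow_mul_pow_eq_zero_of_degree_lt {g₀ g₁ : MvPowerSeries σ R}
    (h₀ : constantCoeff g₀ = 0) (h₁ : constantCoeff g₁ = 0) {d : σ →₀ ℕ} {i j : ℕ}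
    (h : d.degree < i + j) : coeff d (g₀ ^ i * g₁ ^ j) = 0 :=
  coeff_of_lt_order <| (Nat.cast_lt.mpr h).trans_le <| by
    push_cast
    exact (add_le_add (le_order_pow_of_constantCoeff_eq_zero i h₀)
      (le_order_pow_of_constantCoeff_eq_zero j h₁)).trans le_order_mul

theorem hasSubst_pair {a₀ a₁ : MvPowerSeries σ R} (h₀ : constantCoeff a₀ = 0)
    (h₁ : constantCoeff a₁ = 0) : HasSubst ![a₀, a₁] :=
  hasSubst_of_constantCoeff_zero fun s => by fin_cases s <;> simpa

theorem substPS_eq_subst {a : MvPowerSeries σ R} (ha : constantCoeff a = 0)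
    (f : PowerSeries R) : substPS a f = PowerSeries.subst a f := by
  ext d
  rw [PowerSeries.coeff_subst (.of_constantCoeff_zero ha),
    finsum_eq_sum_of_support_subset (s := Finset.range (d.degree + 1))]
  · rfl
  · intro k hk
    by_contra hkd
    simp only [Finset.coe_range, Set.mem_Iio, not_lt, Nat.succ_le_iff] at hkd
    simp [coeff_pow_eq_zero_of_degree_lt ha hkd] at hk

theorem subst2_eq_subst {g₀ g₁ : MvPowerSeries σ R} (h₀ : constantCoeff g₀ = 0)
    (h₁ : constantCoeff g₁ = 0) (F : MvPowerSeries (Fin 2) R) :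
    subst2 g₀ g₁ F = subst ![g₀, g₁] F := by
  have hsymm (i j : ℕ) : (finTwoArrowEquiv' ℕ).symm (i, j) =
      Finsupp.single 0 i + Finsupp.single 1 j := by
    ext s; fin_cases s <;> simp
  have hprod (i j : ℕ) :
      (Finsupp.single (0 : Fin 2) i + Finsupp.single 1 j).prod (fun s k => (![g₀, g₁] s) ^ k) =
        g₀ ^ i * g₁ ^ j := by
    rw [← hsymm]; simp [Finsupp.prod_fintype]
  ext d
  rw [coeff_subst (hasSubst_pair h₀ h₁), ← finsum_comp_equiv (finTwoArrowEquiv' ℕ).symm,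
    finsum_eq_sum_of_support_subset
      (s := Finset.range (d.degree + 1) ×ˢ Finset.range (d.degree + 1)),
    Finset.sum_product]
  · simp only [hsymm, hprod, smul_eq_mul]
    rfl
  · rintro ⟨i, j⟩ hij
    simp only [Finset.coe_product, Finset.coe_range, Set.mem_prod, Set.mem_Iio, Nat.lt_succ_iff]
    by_contra hbig
    apply hij
    dsimp only
    rw [hsymm, hprod, coeff_pow_mul_pow_eq_zero_of_degree_lt h₀ h₁ (by omega), smul_zero]

theorem subst_subst_pair {a₀ a₁ : MvPowerSeries σ R} (ha : HasSubst ![a₀, a₁])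
    {b : σ → MvPowerSeries τ R} (hb : HasSubst b) (F : MvPowerSeries (Fin 2) R) :
    subst b (subst ![a₀, a₁] F) = subst ![subst b a₀, subst b a₁] F := by
  rw [subst_comp_subst_apply ha hb]
  congr 1
  funext s
  fin_cases s <;> rfl

theorem subst_subst_X {a : σ → MvPowerSeries τ R} (ha : HasSubst a) (s : σ)
    (f : PowerSeries R) :
    subst a (PowerSeries.subst (X s : MvPowerSeries σ R) f) = PowerSeries.subst (a s) f := by
  rw [PowerSeries.subst, subst_comp_subst_apply (PowerSeries.HasSubst.X (S := R) s).const ha,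
    subst_X ha]
  rfl

theorem subst_subst_pair_of_hom {F : MvPowerSeries (Fin 2) R}
    (hF : constantCoeff F = 0) {f : PowerSeries R} (hf : PowerSeries.constantCoeff f = 0)
    (hom : PowerSeries.subst F f =
      subst ![PowerSeries.subst (X 0) f, PowerSeries.subst (X 1) f] F)
    {g₀ g₁ : MvPowerSeries τ R} (h₀ : constantCoeff g₀ = 0) (h₁ : constantCoeff g₁ = 0) :
    PowerSeries.subst (subst ![g₀, g₁] F) f =
      subst ![PowerSeries.subst g₀ f, PowerSeries.subst g₁ f] F := by
  have hg := hasSubst_pair h₀ h₁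
  have hfX (s : Fin 2) :
      constantCoeff (PowerSeries.subst (X s : MvPowerSeries (Fin 2) R) f) = 0 :=
    PowerSeries.constantCoeff_subst_eq_zero (constantCoeff_X s) f hf
  have hF' := (PowerSeries.HasSubst.of_constantCoeff_zero hF).const
  calc PowerSeries.subst (subst ![g₀, g₁] F) f
      = subst ![g₀, g₁] (PowerSeries.subst F f) := (subst_comp_subst_apply hF' hg f).symm
    _ = subst ![g₀, g₁] (subst ![PowerSeries.subst (X 0) f, PowerSeries.subst (X 1) f] F) := by
        rw [hom]
    _ = subst ![PowerSeries.subst g₀ f, PowerSeries.subst g₁ f] F := by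
        rw [subst_subst_pair (hasSubst_pair (hfX 0) (hfX 1)) hg, subst_subst_X hg,
          subst_subst_X hg]
        rfl

noncomputable def nSeries (F : MvPowerSeries (Fin 2) R) : ℕ → PowerSeries R
  | 0 => 0
  | m + 1 => subst ![nSeries F m, PowerSeries.X] F

theorem constantCoeff_nSeries {F : MvPowerSeries (Fin 2) R} (hF : constantCoeff F = 0) (m : ℕ) :
    PowerSeries.constantCoeff (nSeries F m) = 0 := by
  induction m with
  | zero => exact map_zero _
  | succ m ih =>
    exact constantCoeff_subst_eq_zero (hasSubst_pair ih PowerSeries.constantCoeff_X)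
      (fun s => by fin_cases s; exacts [ih, PowerSeries.constantCoeff_X]) hF

theorem subst_nSeries_of_hom {F : MvPowerSeries (Fin 2) R}
    (hF : constantCoeff F = 0) {f : PowerSeries R} (hf : PowerSeries.constantCoeff f = 0)
    (hom : PowerSeries.subst F f =
      subst ![PowerSeries.subst (X 0) f, PowerSeries.subst (X 1) f] F) (m : ℕ) :
    PowerSeries.subst (nSeries F m) f = PowerSeries.subst f (nSeries F m) := by
  induction m with
  | zero =>
    rw [nSeries, PowerSeries.subst_zero_of_constantCoeff_zero hf,
      ← PowerSeries.coe_substAlgHom (.of_constantCoeff_zero' hf), map_zero]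
  | succ m ih =>
    have hm := constantCoeff_nSeries hF m
    have hsf := PowerSeries.HasSubst.of_constantCoeff_zero' hf
    rw [nSeries, subst_subst_pair_of_hom hF hf hom hm PowerSeries.constantCoeff_X, ih,
      PowerSeries.X_subst, PowerSeries.subst_def f (subst ![nSeries F m, PowerSeries.X] F),
      subst_subst_pair (hasSubst_pair hm PowerSeries.constantCoeff_X) hsf.const,
      ← PowerSeries.subst_def, ← PowerSeries.subst_def, PowerSeries.subst_X hsf]

theorem PowerSeries.subst_C_mul_X_pow {f : PowerSeries R} (hf : constantCoeff f = 0) (v : R)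
    (q : ℕ) : subst f (C v * X ^ q) = C v * f ^ q := by
  have hsf := HasSubst.of_constantCoeff_zero' hf
  rw [subst_mul hsf, subst_pow hsf, subst_X hsf, subst_C]
  rfl

theorem PowerSeries.subst_C_mul_X_pow_eq_expand_rescale (v : R) {q : ℕ} (hq : q ≠ 0)
    (f : PowerSeries R) : subst (C v * X ^ q) f = expand q hq (rescale v f) := by
  rw [expand_apply, rescale_eq_subst, subst_comp_subst_apply (.smul_X' v) (.X_pow hq),
    subst_smul (.X_pow hq), subst_X (.X_pow hq), smul_eq_C_mul]

theorem PowerSeries.coeff_subst_C_mul_X_pow (v : R) {q : ℕ} (hq : q ≠ 0) (f : PowerSeries R)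
    (m : ℕ) : coeff (q * m) (subst (C v * X ^ q) f) = v ^ m * coeff m f := by
  rw [subst_C_mul_X_pow_eq_expand_rescale v hq, coeff_expand_mul, coeff_rescale]

theorem PowerSeries.coeff_pow_expChar_pow (p : ℕ) [ExpChar R p] (n m : ℕ) (f : PowerSeries R) :
    coeff (p ^ n * m) (f ^ p ^ n) = coeff m f ^ p ^ n := by
  have hq : p ^ n ≠ 0 := pow_ne_zero n (expChar_ne_zero R p)
  have frobenius : map (iterateFrobenius R p n) (expand (p ^ n) hq f) = f ^ p ^ n :=
    MvPowerSeries.map_iterateFrobenius_expand p (expChar_ne_zero R p) f n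
  rw [← frobenius, coeff_map, coeff_expand_mul, iterateFrobenius_def]

end

theorem stmt_13 (p n : ℕ) (hp : p.Prime)
    (R : Type) [CommRing R] (hpR : (p : R) = 0) (v : R)
    (F : MvPowerSeries (Fin 2) R)
    (hF0 : MvPowerSeries.constantCoeff F = 0)
    -- the m-series of F, and the hypothesis that the p-series is v·X^(p^n)
    (ms : ℕ → PowerSeries R)
    (hms0 : ms 0 = 0)
    (hmsS : ∀ m, ms (m + 1) = subst2 (ms m) PowerSeries.X F)
    (hp_series : ms p = PowerSeries.C v * PowerSeries.X ^ (p ^ n)) :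
    ∀ f : PowerSeries R, PowerSeries.constantCoeff f = 0 →
      substPS F f =
        subst2 (substPS (MvPowerSeries.X 0 : MvPowerSeries (Fin 2) R) f)
          (substPS (MvPowerSeries.X 1 : MvPowerSeries (Fin 2) R) f) F →
      (substPS (PowerSeries.C v * PowerSeries.X ^ (p ^ n)) f =
        PowerSeries.C v * f ^ (p ^ n)) ∧
      (∀ m : ℕ, 1 ≤ m → v * (PowerSeries.coeff m f) ^ (p ^ n) =
        v ^ m * PowerSeries.coeff m f) := by
  intro f hf hom
  have hfX (s : Fin 2) :
      constantCoeff (PowerSeries.subst (X s : MvPowerSeries (Fin 2) R) f) = 0 :=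
    PowerSeries.constantCoeff_subst_eq_zero (constantCoeff_X s) f hf
  rw [substPS_eq_subst hF0, substPS_eq_subst (constantCoeff_X 0),
    substPS_eq_subst (constantCoeff_X 1), subst2_eq_subst (hfX 0) (hfX 1)] at hom
  have hms : ms = nSeries F := by
    funext m
    induction m with
    | zero => exact hms0
    | succ m ih =>
      rw [hmsS, ih, subst2_eq_subst (constantCoeff_nSeries hF0 m) PowerSeries.constantCoeff_X]
      rfl
  have hq : p ^ n ≠ 0 := pow_ne_zero n hp.ne_zero
  have hpSeries : PowerSeries.subst (PowerSeries.C v * PowerSeries.X ^ p ^ n) f =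
      PowerSeries.C v * f ^ p ^ n := by
    rw [← hp_series, hms, subst_nSeries_of_hom hF0 hf hom, ← hms, hp_series,
      PowerSeries.subst_C_mul_X_pow hf]
  have hvX : PowerSeries.constantCoeff (PowerSeries.C v * PowerSeries.X ^ p ^ n) = 0 := by
    simp [zero_pow hq]
  refine ⟨by rwa [substPS_eq_subst hvX], fun m _ => ?_⟩
  nontriviality R
  have : Fact p.Prime := ⟨hp⟩
  have : CharP R p := (CharP.charP_iff_prime_eq_zero hp).mpr hpR
  have hcoeff := congrArg (PowerSeries.coeff (p ^ n * m)) hpSeries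
  rwa [PowerSeries.coeff_subst_C_mul_X_pow v hq, PowerSeries.coeff_C_mul,
    PowerSeries.coeff_pow_expChar_pow, eq_comm] at hcoeff
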